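/- A torsion group (every element has finite order) is hyperbolic if and only if it is finite. -/

import Mathlib

/-- The word length of `g` with respect to a generating set `S`. -/
noncomputable def wordLength {G : Type*} [Group G] (S : Set G) (g : G) : ℕ :=
  sInf {n : ℕ | ∃ w : List G, w.length = n ∧ (∀ x ∈ w, x ∈ S ∨ x⁻¹ ∈ S) ∧ w.prod = g}

/-- The word metric on `G` associated to a generating set `S`. -/
noncomputable def wordDist {G : Type*} [Group G] (S : Set G) (g h : G) : ℝ :=
  (wordLength S (g⁻¹ * h) : ℝ)

/-- A finitely generated group is hyperbolic if its word metric (equivalently, its Cayley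
graph) with respect to some finite generating set satisfies Gromov's four-point
`δ`-hyperbolicity condition for some `δ ≥ 0`. -/
def IsHyperbolicGroup (G : Type*) [Group G] : Prop :=
  ∃ S : Set G, S.Finite ∧ Subgroup.closure S = ⊤ ∧
    ∃ δ : ℝ, 0 ≤ δ ∧ ∀ x y z w : G,
      wordDist S x y + wordDist S z w ≤
        max (wordDist S x z + wordDist S y w) (wordDist S x w + wordDist S y z) + δ

/-!
An infinite group with a finite generating set contains geodesic words of every length. In a
`δ`-hyperbolic group, an element with `ℓ(g²) > ℓ(g) + δ` has powers whose lengths grow linearly,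
so in a torsion group `ℓ(g²) ≤ ℓ(g) + δ` for every `g`. Cut a geodesic word of length `3n` into
three subwords `a u v`; this bound on squares, applied to `a u` and `a u v`, makes `u a` and `v a`
`3δ`-short. Then `u v u⁻¹` has length at most `n + 6δ`, while its square has length at least
`2n - 6δ`, which is impossible once `n > 13δ`.
-/

open Pointwise

variable {G : Type*} [Group G] {S : Set G} {δ : ℝ}

lemma wordLength_prod_le_length {w : List G} (hw : ∀ x ∈ w, x ∈ S ∨ x⁻¹ ∈ S) :
    wordLength S w.prod ≤ w.length :=
  Nat.sInf_le ⟨w, rfl, hw, rfl⟩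

lemma exists_word_length_eq_wordLength (hcl : Subgroup.closure S = ⊤) (g : G) :
    ∃ w : List G, (∀ x ∈ w, x ∈ S ∨ x⁻¹ ∈ S) ∧ w.prod = g ∧ w.length = wordLength S g := by
  have hg : g ∈ Submonoid.closure (S ∪ S⁻¹) := by
    rw [← Subgroup.closure_toSubmonoid, hcl]; trivial
  obtain ⟨w, hw, rfl⟩ := Submonoid.exists_list_of_mem_closure hg
  obtain ⟨v, hv, hvw, hlen⟩ := Nat.sInf_mem (⟨_, w, rfl, hw, rfl⟩ :
    {n | ∃ v : List G, v.length = n ∧ (∀ x ∈ v, x ∈ S ∨ x⁻¹ ∈ S) ∧ v.prod = w.prod}.Nonempty)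
  exact ⟨v, hvw, hlen, hv⟩

lemma wordLength_one : wordLength S (1 : G) = 0 :=
  Nat.le_zero.mp (wordLength_prod_le_length (w := []) (by simp))

lemma wordLength_inv (g : G) : wordLength S g⁻¹ = wordLength S g := by
  suffices h : ∀ g : G,
      {n | ∃ w : List G, w.length = n ∧ (∀ x ∈ w, x ∈ S ∨ x⁻¹ ∈ S) ∧ w.prod = g} ⊆
      {n | ∃ w : List G, w.length = n ∧ (∀ x ∈ w, x ∈ S ∨ x⁻¹ ∈ S) ∧ w.prod = g⁻¹} by
    unfold wordLength
    rw [(h g).antisymm (by simpa using h g⁻¹)]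
  rintro g _ ⟨w, rfl, hw, rfl⟩
  refine ⟨(w.map (·⁻¹)).reverse, by simp, fun x hx => ?_, (List.prod_inv_reverse w).symm⟩
  obtain ⟨y, hy, rfl⟩ := List.mem_map.mp (List.mem_reverse.mp hx)
  simpa [or_comm] using hw y hy

lemma wordLength_mul_le (hcl : Subgroup.closure S = ⊤) (g h : G) :
    wordLength S (g * h) ≤ wordLength S g + wordLength S h := by
  obtain ⟨u, hu, rfl, hul⟩ := exists_word_length_eq_wordLength hcl g
  obtain ⟨v, hv, rfl, hvl⟩ := exists_word_length_eq_wordLength hcl h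
  rw [← hul, ← hvl, ← List.length_append, ← List.prod_append]
  exact wordLength_prod_le_length fun x hx => (List.mem_append.mp hx).elim (hu x) (hv x)

lemma finite_setOf_wordLength_le (hS : S.Finite) (hcl : Subgroup.closure S = ⊤) (n : ℕ) :
    {g : G | wordLength S g ≤ n}.Finite := by
  have : Finite ↥(S ∪ S⁻¹) := (hS.union hS.inv).to_subtype
  refine ((List.finite_length_le _ n).image fun l : List ↥(S ∪ S⁻¹) => (l.map (↑)).prod).subset ?_
  intro g hg
  obtain ⟨w, hw, rfl, hlen⟩ := exists_word_length_eq_wordLength hcl g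
  lift w to List ↥(S ∪ S⁻¹) using hw
  exact ⟨w, by simpa using hlen.trans_le hg, rfl⟩

lemma exists_le_wordLength [Infinite G] (hS : S.Finite) (hcl : Subgroup.closure S = ⊤) (n : ℕ) :
    ∃ g : G, n ≤ wordLength S g := by
  by_contra! h
  exact Set.infinite_univ ((finite_setOf_wordLength_le hS hcl n).subset fun g _ => (h g).le)

def IsGeodesicWord (S : Set G) (w : List G) : Prop :=
  (∀ x ∈ w, x ∈ S ∨ x⁻¹ ∈ S) ∧ wordLength S w.prod = w.length

lemma IsGeodesicWord.of_append (hcl : Subgroup.closure S = ⊤) {u v : List G}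
    (h : IsGeodesicWord S (u ++ v)) : IsGeodesicWord S u ∧ IsGeodesicWord S v := by
  have hu := wordLength_prod_le_length fun x hx => h.1 x (List.mem_append_left v hx)
  have hv := wordLength_prod_le_length fun x hx => h.1 x (List.mem_append_right u hx)
  have huv := wordLength_mul_le hcl u.prod v.prod
  rw [← List.prod_append, h.2, List.length_append] at huv
  exact ⟨⟨fun x hx => h.1 x (List.mem_append_left v hx), by omega⟩,
    ⟨fun x hx => h.1 x (List.mem_append_right u hx), by omega⟩⟩

lemma exists_isGeodesicWord_length_eq [Infinite G] (hS : S.Finite)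
    (hcl : Subgroup.closure S = ⊤) (n : ℕ) : ∃ w : List G, IsGeodesicWord S w ∧ w.length = n := by
  obtain ⟨g, hg⟩ := exists_le_wordLength hS hcl n
  obtain ⟨w, hw, rfl, hlen⟩ := exists_word_length_eq_wordLength hcl g
  have hw' : IsGeodesicWord S (w.take n ++ w.drop n) := by
    rw [List.take_append_drop]; exact ⟨hw, hlen.symm⟩
  exact ⟨w.take n, (hw'.of_append hcl).1, by simp; omega⟩

lemma wordDist_comm (g h : G) : wordDist S g h = wordDist S h g := by
  rw [wordDist, wordDist, ← wordLength_inv, mul_inv_rev, inv_inv]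

@[simp]
lemma wordDist_mul_left (g x y : G) : wordDist S (g * x) (g * y) = wordDist S x y := by
  simp [wordDist, mul_assoc]

@[simp]
lemma wordDist_self_mul (x y : G) : wordDist S x (x * y) = wordLength S y := by
  simp [wordDist]

@[simp]
lemma wordDist_one_left (g : G) : wordDist S 1 g = wordLength S g := by
  simp [wordDist]

@[simp]
lemma wordDist_one_right (g : G) : wordDist S g 1 = wordLength S g := by
  rw [wordDist_comm, wordDist_one_left]

noncomputable def gromovProduct (S : Set G) (p x y : G) : ℝ :=
  (wordDist S p x + wordDist S p y - wordDist S x y) / 2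

def FourPointCondition (S : Set G) (δ : ℝ) : Prop :=
  ∀ x y z w : G, wordDist S x y + wordDist S z w ≤
    max (wordDist S x z + wordDist S y w) (wordDist S x w + wordDist S y z) + δ

lemma FourPointCondition.nonneg (h : FourPointCondition S δ) : 0 ≤ δ := by
  simpa [wordDist, wordLength_one] using h 1 1 1 1

lemma FourPointCondition.min_gromovProduct_sub_le (h : FourPointCondition S δ) (p x y z : G) :
    min (gromovProduct S p x z) (gromovProduct S p z y) - δ / 2 ≤ gromovProduct S p x y := by
  have h4 := h x y z p
  rw [wordDist_comm z p, wordDist_comm y p, wordDist_comm x p, wordDist_comm y z] at h4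
  rw [sub_le_iff_le_add, min_le_iff, gromovProduct, gromovProduct, gromovProduct]
  rcases le_max_iff.mp (sub_le_iff_le_add.mpr h4) with h' | h'
  · left; linarith
  · right; linarith

lemma FourPointCondition.le_wordLength_pow_succ_sub (h : FourPointCondition S δ) {g : G}
    (hg : (wordLength S g : ℝ) + δ < wordLength S (g ^ 2)) (i : ℕ) :
    (wordLength S (g ^ 2) : ℝ) - wordLength S g - δ ≤
      wordLength S (g ^ (i + 2)) - wordLength S (g ^ (i + 1)) := by
  induction i with
  | zero => simp only [zero_add, pow_one]; linarith [h.nonneg]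
  | succ i ih =>
    have key := h.min_gromovProduct_sub_le (g ^ (i + 2)) (g ^ (i + 1)) (g ^ (i + 3)) 1
    have e₁ : g ^ (i + 2) = g ^ (i + 1) * g := pow_succ _ _
    have e₂ : g ^ (i + 3) = g ^ (i + 2) * g := pow_succ _ _
    have e₃ : g ^ (i + 3) = g ^ (i + 1) * g ^ 2 := pow_add g (i + 1) 2
    have d₁ : wordDist S (g ^ (i + 2)) (g ^ (i + 1)) = wordLength S g := by
      rw [wordDist_comm, e₁, wordDist_self_mul]
    have d₂ : wordDist S (g ^ (i + 2)) (g ^ (i + 3)) = wordLength S g := by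
      rw [e₂, wordDist_self_mul]
    have d₃ : wordDist S (g ^ (i + 1)) (g ^ (i + 3)) = wordLength S (g ^ 2) := by
      rw [e₃, wordDist_self_mul]
    -- The neighbours of `g ^ (i + 2)` have Gromov product `ℓ g - ℓ (g ^ 2) / 2` there, too small
    -- for both of them to lie close to the geodesic back to `1`; by `ih`, `g ^ (i + 1)` does.
    simp only [gromovProduct, d₁, d₂, d₃, wordDist_one_left, wordDist_one_right] at key
    rcases min_le_iff.mp (sub_le_iff_le_add.mp key) with h' | h' <;> linarith

lemma FourPointCondition.wordLength_sq_le_of_isOfFinOrder (h : FourPointCondition S δ) {g : G}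
    (hg : IsOfFinOrder g) : (wordLength S (g ^ 2) : ℝ) ≤ wordLength S g + δ := by
  by_contra! hlt
  have growth : ∀ n : ℕ, (wordLength S g : ℝ) + n * (wordLength S (g ^ 2) - wordLength S g - δ) ≤
      wordLength S (g ^ (n + 1)) := by
    intro n
    induction n with
    | zero => simp
    | succ n ih => push_cast; linarith [h.le_wordLength_pow_succ_sub hlt n]
  have hn := growth (orderOf g)
  rw [pow_succ g (orderOf g), pow_orderOf_eq_one, one_mul] at hn
  have : (0 : ℝ) < orderOf g := by exact_mod_cast hg.orderOf_pos
  nlinarith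

lemma FourPointCondition.wordLength_mul_le_three_mul (h : FourPointCondition S δ)
    {p r q : G} {s t : ℕ} (hst : s ≤ t) (hp : wordLength S p = t) (hr : wordLength S r = s)
    (hpr : wordLength S (p * r) = s + t) (hq : wordLength S q = s)
    (hqpr : wordLength S (q⁻¹ * (p * r)) = t)
    (hsq : (wordLength S ((p * r) ^ 2) : ℝ) ≤ wordLength S (p * r) + δ) :
    (wordLength S (r * q) : ℝ) ≤ 3 * δ := by
  -- Since `ℓ (x ^ 2) ≤ ℓ x + δ`, the geodesic `x → x * q → x ^ 2` heads back towards `1` along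
  -- `x → p → 1`, so `x * q` and `p`, both at distance `s` from `x`, are close.
  set x := p * r with hx
  have hδ := h.nonneg
  have d₁ : wordDist S x (x ^ 2) = s + t := by rw [sq, wordDist_self_mul, hpr]; push_cast; ring
  have d₂ : wordDist S (x ^ 2) (x * q) = t := by
    rw [sq, wordDist_mul_left, wordDist_comm, wordDist, hqpr]
  have d₃ : wordDist S x p = s := by
    rw [wordDist_comm, wordDist_self_mul, hr]
  have d₄ : wordDist S p (x * q) = wordLength S (r * q) := by
    rw [hx, mul_assoc, wordDist_self_mul]
  have step₁ := h.min_gromovProduct_sub_le x 1 (x * q) (x ^ 2)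
  have step₂ := h.min_gromovProduct_sub_le x p (x * q) 1
  simp only [gromovProduct, d₁, d₂, d₃, d₄, wordDist_one_left, wordDist_one_right,
    wordDist_self_mul, hp, hq, hpr] at step₁ step₂ hsq
  push_cast at step₁ step₂ hsq
  have hst' : (s : ℝ) ≤ t := by exact_mod_cast hst
  have hxq : (wordLength S (x * q) : ℝ) ≤ t + 2 * δ := by
    rcases min_le_iff.mp (sub_le_iff_le_add.mp step₁) with h₁ | h₁ <;> linarith
  rcases min_le_iff.mp (sub_le_iff_le_add.mp step₂) with h₂ | h₂ <;> linarith

lemma FourPointCondition.le_of_wordLength_eq (h : FourPointCondition S δ)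
    (hcl : Subgroup.closure S = ⊤) (hsq : ∀ g : G, (wordLength S (g ^ 2) : ℝ) ≤ wordLength S g + δ)
    {a u v : G} {n : ℕ} (ha : wordLength S a = n) (hu : wordLength S u = n)
    (hv : wordLength S v = n) (hau : wordLength S (a * u) = 2 * n)
    (huv : wordLength S (u * v) = 2 * n) (hauv : wordLength S (a * u * v) = 3 * n) :
    (n : ℝ) ≤ 13 * δ := by
  have hmul (g h : G) : (wordLength S (g * h) : ℝ) ≤ wordLength S g + wordLength S h := by
    exact_mod_cast wordLength_mul_le hcl g h
  have hva : (wordLength S (v * a) : ℝ) ≤ 3 * δ :=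
    h.wordLength_mul_le_three_mul (s := n) (t := 2 * n) (by omega) hau hv (by rw [hauv]; ring) ha
      (by rwa [mul_assoc, inv_mul_cancel_left]) (hsq _)
  have hua : (wordLength S (u * a) : ℝ) ≤ 3 * δ :=
    h.wordLength_mul_le_three_mul le_rfl ha hu (by rw [hau, two_mul]) ha
      (by rwa [inv_mul_cancel_left]) (hsq _)
  have hvu : (wordLength S (v * u⁻¹) : ℝ) ≤ 6 * δ := by
    have := hmul (v * a) (u * a)⁻¹
    rw [wordLength_inv, show v * a * (u * a)⁻¹ = v * u⁻¹ by group] at this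
    linarith
  have hshort := hmul u (v * u⁻¹)
  have hlong := hmul ((u * v * u⁻¹) ^ 2) (v * u⁻¹)⁻¹
  rw [← mul_assoc] at hshort
  rw [wordLength_inv, show (u * v * u⁻¹) ^ 2 * (v * u⁻¹)⁻¹ = u * v by rw [sq]; group] at hlong
  push_cast [hu, huv] at hshort hlong
  linarith [hsq (u * v * u⁻¹)]

lemma FourPointCondition.le_of_isGeodesicWord (h : FourPointCondition S δ)
    (hcl : Subgroup.closure S = ⊤) (hsq : ∀ g : G, (wordLength S (g ^ 2) : ℝ) ≤ wordLength S g + δ)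
    {w : List G} {n : ℕ} (hw : IsGeodesicWord S w) (hlen : w.length = 3 * n) :
    (n : ℝ) ≤ 13 * δ := by
  obtain ⟨a, u, v, rfl, ha, hu, hv⟩ : ∃ a u v : List G,
      w = a ++ u ++ v ∧ a.length = n ∧ u.length = n ∧ v.length = n :=
    ⟨w.take n, (w.drop n).take n, (w.drop n).drop n, by simp, by simp; omega, by simp; omega,
      by simp; omega⟩
  have hauv := hw.of_append hcl
  have hau := hauv.1.of_append hcl
  have huv := ((List.append_assoc a u v ▸ hw).of_append hcl).2
  refine h.le_of_wordLength_eq hcl hsq (a := a.prod) (u := u.prod) (v := v.prod) ?_ ?_ ?_ ?_ ?_ ?_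
  · rw [hau.1.2, ha]
  · rw [hau.2.2, hu]
  · rw [hauv.2.2, hv]
  · rw [← List.prod_append, hauv.1.2, List.length_append]; omega
  · rw [← List.prod_append, huv.2, List.length_append]; omega
  · rw [← List.prod_append, ← List.prod_append, hw.2]; simp only [List.length_append]; omega

lemma isHyperbolicGroup_of_finite [Finite G] : IsHyperbolicGroup G := by
  refine ⟨Set.univ, Set.finite_univ, Subgroup.closure_univ, 2, zero_le_two, fun x y z w => ?_⟩
  have hle (g h : G) : wordDist Set.univ g h ≤ 1 := by
    simpa [wordDist] using (Nat.cast_le (α := ℝ)).mpr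
      (wordLength_prod_le_length (S := Set.univ) (w := [g⁻¹ * h]) (by simp))
  have hnonneg (g h : G) : 0 ≤ wordDist Set.univ g h := Nat.cast_nonneg _
  linarith [le_max_left (wordDist Set.univ x z + wordDist Set.univ y w)
    (wordDist Set.univ x w + wordDist Set.univ y z), hle x y, hle z w, hnonneg x z, hnonneg y w]

/-- A torsion group is hyperbolic if and only if it is finite. -/
theorem torsion_hyperbolic_iff_finite (G : Type) [Group G]
    (htors : ∀ g : G, IsOfFinOrder g) :
    IsHyperbolicGroup G ↔ Finite G := by
  refine ⟨fun ⟨S, hS, hcl, δ, _, h4⟩ => ?_, fun _ => isHyperbolicGroup_of_finite⟩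
  have h : FourPointCondition S δ := h4
  by_contra hfin
  have : Infinite G := not_finite_iff_infinite.mp hfin
  obtain ⟨n, hn⟩ := exists_nat_gt (13 * δ)
  obtain ⟨w, hw, hlen⟩ := exists_isGeodesicWord_length_eq hS hcl (3 * n)
  exact hn.not_ge (h.le_of_isGeodesicWord hcl (fun g => h.wordLength_sq_le_of_isOfFinOrder (htors g))
    hw hlen)
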